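/- Let A be a unital associative ℂ-algebra of at most countable dimension over ℂ such that the intersection of the annihilators of all simple left A-modules is zero. Then PIdeg(A) = 1 if and only if A is commutative. -/

import Mathlib

/-- A noncommutative polynomial with integer coefficients in `n` indeterminates (an element of
the free `ℤ`-algebra on `n` generators) is a *polynomial identity* of a ring `A` if it vanishes
under every substitution of elements of `A` for the indeterminates. -/
def IsPolyIdentity (A : Type*) [Ring A] {n : ℕ} (p : FreeAlgebra ℤ (Fin n)) : Prop :=
  ∀ v : Fin n → A, FreeAlgebra.lift ℤ v p = 0

/-- The PI degree of a ring `A`: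
`PIdeg A = sup {n ≥ 1 : every polynomial identity of A is a polynomial identity of Mₙ(ℂ)}`,
an element of `ℕ∞`. -/
noncomputable def PIdeg (A : Type*) [Ring A] : ℕ∞ :=
  sSup {N : ℕ∞ | ∃ n : ℕ, N = n ∧ 1 ≤ n ∧
    ∀ (m : ℕ) (p : FreeAlgebra ℤ (Fin m)),
      IsPolyIdentity A p → IsPolyIdentity (Matrix (Fin n) (Fin n) ℂ) p}

/-!
If `A` is commutative, the commutator `X₀X₁ - X₁X₀` is an identity of `A` but of no `Mₙ(ℂ)`
with `n ≥ 2`, while every identity of `A` holds in `ℂ ⊆ A`; hence `PIdeg A = 1`.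

Conversely, if `xy ≠ yx`, the annihilator condition gives a simple module `M` on which `xy - yx`
acts non-trivially, so `dim_ℂ M ≥ 2`. Since `A` has countable dimension, so has the division
algebra `End_A M`, which is therefore `ℂ`: a transcendental `f` would give the uncountable
independent family `(f - z)⁻¹`. By Jacobson density every endomorphism of a two-dimensional
subspace of `M` is then induced by an element of `A`, so every identity of `A` holds in `M₂(ℂ)`
and `PIdeg A ≥ 2`.
-/

open Cardinal Module

universe u v w

theorem FreeAlgebra.map_lift {X B C : Type*} [Ring B] [Ring C] (f : B →+* C) (v : X → B)
    (p : FreeAlgebra ℤ X) : f (lift ℤ v p) = lift ℤ (f ∘ v) p := by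
  induction p using FreeAlgebra.induction with
  | grade0 r => simp
  | grade1 x => simp
  | mul p q hp hq => simp [hp, hq]
  | add p q hp hq => simp [hp, hq]

namespace IsPolyIdentity

variable {B C : Type*} [Ring B] [Ring C] {m : ℕ} {p : FreeAlgebra ℤ (Fin m)}

theorem of_injective (f : B →+* C) (hf : Function.Injective f) (hp : IsPolyIdentity C p) :
    IsPolyIdentity B p := fun v =>
  hf <| by rw [FreeAlgebra.map_lift, map_zero, hp]

theorem of_surjective (f : B →+* C) (hf : Function.Surjective f) (hp : IsPolyIdentity B p) :
    IsPolyIdentity C p := fun v => by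
  obtain ⟨w, rfl⟩ : ∃ w : Fin m → B, f ∘ w = v :=
    ⟨fun i => (hf (v i)).choose, funext fun i => (hf (v i)).choose_spec⟩
  rw [← FreeAlgebra.map_lift, hp, map_zero]

end IsPolyIdentity

def commutatorPoly : FreeAlgebra ℤ (Fin 2) :=
  FreeAlgebra.ι ℤ 0 * FreeAlgebra.ι ℤ 1 - FreeAlgebra.ι ℤ 1 * FreeAlgebra.ι ℤ 0

theorem isPolyIdentity_commutatorPoly_iff {B : Type*} [Ring B] :
    IsPolyIdentity B commutatorPoly ↔ ∀ x y : B, x * y = y * x := by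
  refine ⟨fun h x y => ?_, fun h v => ?_⟩
  · simpa [commutatorPoly, sub_eq_zero] using h ![x, y]
  · simp [commutatorPoly, h (v 0) (v 1)]

theorem Matrix.not_forall_mul_comm {ι R : Type*} [DecidableEq ι] [Fintype ι] [Semiring R]
    [Nontrivial R] {i j : ι} (hij : i ≠ j) : ¬ ∀ X Y : Matrix ι ι R, X * Y = Y * X :=
  fun h => by simpa [hij] using congr_fun₂ (h (single i j 1) (single j i 1)) i i

theorem le_pIdeg {A : Type*} [Ring A] {n : ℕ} (hn : 1 ≤ n)
    (h : ∀ (m : ℕ) (p : FreeAlgebra ℤ (Fin m)),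
      IsPolyIdentity A p → IsPolyIdentity (Matrix (Fin n) (Fin n) ℂ) p) :
    (n : ℕ∞) ≤ PIdeg A :=
  le_sSup ⟨n, rfl, hn, h⟩

theorem pIdeg_le_one_of_commutative {A : Type*} [Ring A] (hA : ∀ x y : A, x * y = y * x) :
    PIdeg A ≤ 1 := by
  refine sSup_le ?_
  rintro _ ⟨n, rfl, -, h⟩
  by_contra! hn
  have h2 : 2 ≤ n := by exact_mod_cast Order.add_one_le_of_lt hn
  have hcomm := isPolyIdentity_commutatorPoly_iff.1
    (h 2 _ (isPolyIdentity_commutatorPoly_iff.2 hA))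
  exact Matrix.not_forall_mul_comm (i := ⟨0, by omega⟩) (j := ⟨1, by omega⟩)
    (Fin.ne_of_val_ne zero_ne_one) hcomm

theorem isPolyIdentity_matrix_one {A : Type*} [Ring A] [Nontrivial A] [Algebra ℂ A]
    {m : ℕ} {p : FreeAlgebra ℤ (Fin m)} (hp : IsPolyIdentity A p) :
    IsPolyIdentity (Matrix (Fin 1) (Fin 1) ℂ) p :=
  (hp.of_injective _ (algebraMap ℂ A).injective).of_surjective (Matrix.scalar (Fin 1))
    fun X => ⟨X 0 0, by ext i j; fin_cases i; fin_cases j; rfl⟩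

section Intertwining

variable {A B M V : Type*} [Ring A] [Ring B] [AddCommGroup M] [AddCommGroup V] [Module A M]
  [Module B V] (ι : V →+ M)

def intertwiningSubring : Subring (A × B) where
  carrier := {ab | ∀ v, ab.1 • ι v = ι (ab.2 • v)}
  mul_mem' {x y} hx hy v := by
    rw [Prod.fst_mul, Prod.snd_mul, mul_smul, mul_smul, hy v, hx]
  one_mem' v := by simp
  add_mem' {x y} hx hy v := by
    rw [Prod.fst_add, Prod.snd_add, add_smul, add_smul, hx v, hy v, map_add]
  zero_mem' v := by simp
  neg_mem' {x} hx v := by rw [Prod.fst_neg, Prod.snd_neg, neg_smul, neg_smul, hx v, map_neg]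

theorem isPolyIdentity_of_intertwining [FaithfulSMul B V] (hι : Function.Injective ι)
    (h : ∀ b : B, ∃ a : A, ∀ v, a • ι v = ι (b • v)) {m : ℕ}
    {p : FreeAlgebra ℤ (Fin m)} (hp : IsPolyIdentity A p) : IsPolyIdentity B p := by
  let S := intertwiningSubring (A := A) (B := B) ι
  have fst_injective : Function.Injective ((RingHom.fst A B).comp S.subtype) := by
    rintro ⟨⟨a, b⟩, hab⟩ ⟨⟨a', b'⟩, hab'⟩ (rfl : a = a')
    ext1
    refine Prod.ext rfl (FaithfulSMul.eq_of_smul_eq_smul fun v => hι ?_)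
    rw [← hab v, ← hab' v]
  have snd_surjective : Function.Surjective ((RingHom.snd A B).comp S.subtype) :=
    fun b => let ⟨a, ha⟩ := h b; ⟨⟨(a, b), ha⟩, rfl⟩
  exact (hp.of_injective _ fst_injective).of_surjective _ snd_surjective

end Intertwining

theorem DivisionRing.isAlgebraic_of_rank_lt {F : Type u} {D : Type v} [Field F] [DivisionRing D]
    [Algebra F D] (h : lift.{u} (Module.rank F D) < lift.{v} #F) (x : D) :
    IsAlgebraic F x := by
  by_contra hx
  -- The double centralizer of `x` is commutative and closed under inversion: a field
  -- containing `x`, to which `Transcendental.linearIndependent_sub_inv` applies.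
  let E := Subalgebra.centralizer F (Subalgebra.centralizer F {x} : Set D)
  have hxE : x ∈ E := Set.subset_centralizer_centralizer rfl
  have hcomm : ∀ a ∈ E, ∀ b ∈ E, a * b = b * a :=
    Set.centralizer_centralizer_comm_of_comm (by simp)
  let _ : Field E :=
    { (inferInstance : Ring E) with
      mul_comm := fun a b => Subtype.ext (hcomm _ a.2 _ b.2)
      inv := fun a => ⟨(a : D)⁻¹, Set.inv_mem_centralizer₀ a.2⟩
      exists_pair_ne := ⟨0, 1, zero_ne_one⟩
      mul_inv_cancel := fun a ha => Subtype.ext (mul_inv_cancel₀ (by simpa using ha))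
      inv_zero := Subtype.ext inv_zero
      nnqsmul := _
      nnqsmul_def := fun _ _ => rfl
      qsmul := _
      qsmul_def := fun _ _ => rfl }
  have hxt : Transcendental F (⟨x, hxE⟩ : E) := fun halg => hx (halg.algHom E.val)
  have hE := hxt.linearIndependent_sub_inv.cardinal_lift_le_rank
  have hED : Module.rank F E ≤ Module.rank F D := Submodule.rank_le (Subalgebra.toSubmodule E)
  exact h.not_ge (hE.trans (lift_le.2 hED))

theorem DivisionRing.algebraMap_bijective_of_rank_lt {F : Type u} {D : Type v} [Field F]
    [IsAlgClosed F] [DivisionRing D] [Algebra F D]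
    (h : lift.{u} (Module.rank F D) < lift.{v} #F) : Function.Bijective (algebraMap F D) :=
  have : Algebra.IsIntegral F D := ⟨fun x => (isAlgebraic_of_rank_lt h x).isIntegral⟩
  IsAlgClosed.algebraMap_bijective_of_isIntegral

namespace IsSimpleModule

variable {F : Type u} {A : Type v} {M : Type w} [Field F] [Ring A] [Algebra F A]
  [AddCommGroup M] [Module A M] [Module F M] [IsScalarTower F A M] [IsSimpleModule A M]

variable (F A M) in
theorem lift_rank_end_le :
    lift.{v} (Module.rank F (Module.End A M)) ≤ lift.{w} (Module.rank F A) := by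
  have := IsSimpleModule.nontrivial A M
  obtain ⟨m, hm⟩ := exists_ne (0 : M)
  have orbit_surjective :
      Function.Surjective ((LinearMap.toSpanSingleton A M m).restrictScalars F) :=
    toSpanSingleton_surjective A hm
  let eval : Module.End A M →ₗ[F] M :=
    { toFun := fun f => f m, map_add' := fun _ _ => rfl, map_smul' := fun _ _ => rfl }
  have eval_injective : Function.Injective eval := fun f g hfg => LinearMap.ext fun x => by
    obtain ⟨a, rfl⟩ := orbit_surjective x
    have hfg : f m = g m := hfg
    simp [hfg]
  exact (lift_le.2 (LinearMap.rank_le_of_injective eval eval_injective)).trans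
    (LinearMap.lift_rank_le_of_surjective _ orbit_surjective)

theorem algebraMap_end_bijective_of_rank_lt [IsAlgClosed F]
    (h : lift.{u} (Module.rank F A) < lift.{v} #F) :
    Function.Bijective (algebraMap F (Module.End A M)) := by
  classical
  refine DivisionRing.algebraMap_bijective_of_rank_lt ?_
  have h1 := lift_le.{u}.2 (lift_rank_end_le F A M)
  have h2 := lift_lt.{max u v, w}.2 h
  simp only [lift_lift] at h1 h2
  rw [← lift_lt.{max u w, v}, lift_lift, lift_lift]
  exact h1.trans_lt h2

theorem exists_smul_eq_of_algebraMap_end_surjective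
    (hF : Function.Surjective (algebraMap F (Module.End A M)))
    {V : Type*} [AddCommGroup V] [Module F V] [Module.Finite F V] (ι : V →ₗ[F] M)
    (hι : Function.Injective ι) (T : Module.End F V) :
    ∃ a : A, ∀ v, a • ι v = ι (T v) := by
  classical
  obtain ⟨π, hπ⟩ := ι.exists_leftInverse_of_injective (LinearMap.ker_eq_bot.2 hι)
  -- `End_A M` acts by scalars, so the `F`-linear map `ι ∘ T ∘ π` commutes with it.
  let f : Module.End (Module.End A M) M :=
    { toFun := ι ∘ₗ T ∘ₗ π
      map_add' := map_add _
      map_smul' := fun φ m => by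
        obtain ⟨z, rfl⟩ := hF φ
        simp only [RingHom.id_apply, Module.End.smul_def, Module.algebraMap_end_apply,
          map_smul] }
  let b := Module.finBasis F V
  obtain ⟨a, ha⟩ := jacobson_density f (Finset.univ.image (ι ∘ b))
  refine ⟨a, fun v => ?_⟩
  have key : (DistribSMul.toLinearMap F M a) ∘ₗ ι = ι ∘ₗ T := b.ext fun i => by
    have := ha (ι (b i)) (Finset.mem_image_of_mem _ (Finset.mem_univ i))
    rw [LinearMap.comp_apply, DistribSMul.toLinearMap_apply, ← this]
    show ι (T (π (ι (b i)))) = _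
    rw [← LinearMap.comp_apply π ι, hπ, LinearMap.id_apply, LinearMap.comp_apply]
  exact LinearMap.congr_fun key v

end IsSimpleModule

theorem two_le_rank_of_smul_smul_ne {F A M : Type*} [Field F] [Ring A] [Algebra F A]
    [AddCommGroup M] [Module A M] [Module F M] [IsScalarTower F A M] {x y : A} {m : M}
    (hxy : x • y • m ≠ y • x • m) : 2 ≤ Module.rank F M := by
  by_contra! h
  obtain ⟨m₀, hm₀⟩ := rank_le_one_iff.1 (lt_natCast_add_one_iff.1 (by exact_mod_cast h))
  have scalar (a : A) : ∃ r : F, a • m₀ = r • m₀ :=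
    let ⟨r, hr⟩ := hm₀ (a • m₀); ⟨r, hr.symm⟩
  obtain ⟨s, rfl⟩ := hm₀ m
  obtain ⟨rx, hx⟩ := scalar x
  obtain ⟨ry, hy⟩ := scalar y
  have key : x • y • m₀ = y • x • m₀ := by
    rw [hy, smul_comm x ry, hx, smul_comm y rx, hy, smul_comm ry rx]
  exact hxy (by rw [smul_comm y s, smul_comm x s, smul_comm x s, smul_comm y s, key])

theorem isPolyIdentity_matrix_of_le_rank {F : Type u} {A : Type v} {M : Type w} [Field F]
    [IsAlgClosed F] [Ring A] [Algebra F A] [AddCommGroup M] [Module A M] [Module F M]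
    [IsScalarTower F A M] [IsSimpleModule A M] (hA : lift.{u} (Module.rank F A) < lift.{v} #F)
    {n : ℕ} (hn : n ≤ Module.rank F M) {k : ℕ} {p : FreeAlgebra ℤ (Fin k)}
    (hp : IsPolyIdentity A p) : IsPolyIdentity (Matrix (Fin n) (Fin n) F) p := by
  obtain ⟨ι, hι⟩ := le_rank_iff_exists_linearMap.1 hn
  have hEnd : IsPolyIdentity (Module.End F (Fin n → F)) p :=
    isPolyIdentity_of_intertwining ι.toAddMonoidHom hι
      (IsSimpleModule.exists_smul_eq_of_algebraMap_end_surjective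
        (IsSimpleModule.algebraMap_end_bijective_of_rank_lt hA).2 ι hι) hp
  exact hEnd.of_surjective LinearMap.toMatrixAlgEquiv'.toRingHom
    LinearMap.toMatrixAlgEquiv'.surjective

theorem exists_simpleModule_smul_ne_zero {A : Type u} [Ring A]
    (hsemi : sInf {J : Ideal A | ∃ M : ModuleCat.{u} A,
        IsSimpleModule A M ∧ J = Module.annihilator A M} = ⊥) {a : A} (ha : a ≠ 0) :
    ∃ M : ModuleCat.{u} A, IsSimpleModule A M ∧ ∃ m : M, a • m ≠ 0 := by
  by_contra! h
  refine ha ((Submodule.mem_bot A).1 ?_)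
  rw [← hsemi]
  refine Submodule.mem_sInf.2 ?_
  rintro _ ⟨M, hM, rfl⟩
  exact Module.mem_annihilator.2 (h M hM)

/-- Let `A` be a unital associative `ℂ`-algebra of at most countable dimension such
that the intersection of the annihilators of all simple left `A`-modules is zero.  Then
`PIdeg A = 1` if and only if `A` is commutative. -/
theorem pIdeg_eq_one_iff_commutative
    {A : Type u} [Ring A] [Nontrivial A] [Algebra ℂ A]
    (hdim : Module.rank ℂ A ≤ Cardinal.aleph0)
    (hsemi : sInf {J : Ideal A | ∃ M : ModuleCat.{u} A,
        IsSimpleModule A M ∧ J = Module.annihilator A M} = ⊥) :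
    PIdeg A = 1 ↔ ∀ x y : A, x * y = y * x := by
  refine ⟨fun hPI => ?_, fun hA => le_antisymm (pIdeg_le_one_of_commutative hA)
    (le_pIdeg le_rfl fun _ _ => isPolyIdentity_matrix_one)⟩
  by_contra! hnc
  obtain ⟨x, y, hxy⟩ := hnc
  obtain ⟨M, hM, m, hm⟩ := exists_simpleModule_smul_ne_zero hsemi (sub_ne_zero.2 hxy)
  let _ := Module.compHom M (algebraMap ℂ A)
  have : IsScalarTower ℂ A M := .of_algebraMap_smul fun _ _ => rfl
  have hrank : lift.{0} (Module.rank ℂ A) < lift.{u} #ℂ := by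
    rw [mk_complex, lift_continuum]
    exact (lift_le_aleph0.2 hdim).trans_lt aleph0_lt_continuum
  have h2 : 2 ≤ Module.rank ℂ M := two_le_rank_of_smul_smul_ne (x := x) (y := y) (m := m)
    (by rwa [sub_smul, mul_smul, mul_smul, sub_ne_zero] at hm)
  have h2PI := le_pIdeg one_le_two fun _ _ hp => isPolyIdentity_matrix_of_le_rank hrank h2 hp
  exact absurd (h2PI.trans_eq hPI) (by norm_num)
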